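/- arXiv:2403.10813 — 4 statements merged into one kernel-verified Lean document; each statement's English description precedes it below -/
import Mathlib

section
/- If f is a bounded analytic function on the right half-plane {z : Re z > 0} that vanishes at pairwise distinct points d₁, d₂, … with inf |dₙ| > 0 and ∑ₙ Re(1/dₙ) = ∞, then f vanishes identically on {z : Re z > 0}. -/
/-!
Dividing `f` by the Blaschke factor `(z - a) / (z + conj a)` of one of its zeros does not increase
`sup ‖f‖`: the factor has modulus close to `1` near the imaginary axis and near infinity, so the
maximum modulus principle on a truncated half-disc bounds the quotient by `M * (1 + δ)` for every
`δ > 0`. Dividing out the first `N` zeros gives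
`‖f z‖ ≤ M * ∏ ‖z - dₖ‖ / ‖z + conj dₖ‖ ≤ M * exp (-2 * re z * ∑ re dₖ / ‖z + conj dₖ‖ ^ 2)`,
and since `‖z + conj dₖ‖ ≤ C * ‖dₖ‖` when `‖dₖ‖` is bounded below, this sum dominates a multiple of
`∑ re (1 / dₖ) = ∞`.
-/

open Complex ComplexConjugate Filter Finset Metric Set Topology

lemma norm_add_conj_sq (z a : ℂ) : ‖z + conj a‖ ^ 2 = ‖z - a‖ ^ 2 + 4 * z.re * a.re := by
  simp only [Complex.sq_norm, Complex.normSq_apply, add_re, add_im, sub_re, sub_im,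
    conj_re, conj_im]
  ring

lemma norm_add_conj_le_of_re_mul_re_le {z a : ℂ} {δ : ℝ} (hδ : 0 ≤ δ)
    (h : 4 * z.re * a.re ≤ δ * ‖z - a‖ ^ 2) : ‖z + conj a‖ ≤ (1 + δ) * ‖z - a‖ := by
  rw [← sq_le_sq₀ (norm_nonneg _) (by positivity), norm_add_conj_sq, mul_pow]
  nlinarith [sq_nonneg ‖z - a‖, mul_nonneg (sq_nonneg δ) (sq_nonneg ‖z - a‖)]

lemma re_mul_re_le_of_re_eq {z a : ℂ} {δ η : ℝ} (hδ : 0 ≤ δ) (hη : 0 ≤ η) (hηa : η ≤ a.re / 2)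
    (hηδ : η ≤ δ * a.re / 16) (hz : z.re = η) : 4 * z.re * a.re ≤ δ * ‖z - a‖ ^ 2 := by
  have hre : a.re / 2 ≤ ‖z - a‖ := by
    have := neg_le_of_abs_le (abs_re_le_norm (z - a))
    rw [sub_re] at this
    linarith
  nlinarith [mul_le_mul_of_nonneg_left (pow_le_pow_left₀ (by linarith) hre 2) hδ,
    mul_le_mul_of_nonneg_right hηδ (by linarith : 0 ≤ a.re)]

lemma re_mul_re_le_of_norm_eq {z a : ℂ} {δ R : ℝ} (hδ : 0 ≤ δ) (ha : 0 ≤ a.re)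
    (hR : 2 * ‖a‖ ≤ R) (hRδ : 16 * a.re ≤ δ * R) (hz : ‖z‖ = R) :
    4 * z.re * a.re ≤ δ * ‖z - a‖ ^ 2 := by
  have hza : R / 2 ≤ ‖z - a‖ := by linarith [norm_sub_norm_le z a]
  have hzre : z.re ≤ R := hz ▸ re_le_norm z
  have hR0 : 0 ≤ R := hz ▸ norm_nonneg z
  nlinarith [mul_le_mul_of_nonneg_left (pow_le_pow_left₀ (by linarith [norm_nonneg a]) hza 2) hδ,
    mul_le_mul_of_nonneg_right hzre ha, mul_le_mul_of_nonneg_right hRδ hR0]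

lemma add_conj_ne_zero {z a : ℂ} (hz : 0 < z.re) (ha : 0 ≤ a.re) : z + conj a ≠ 0 := fun h => by
  have := congrArg re h
  simp only [add_re, conj_re, zero_re] at this
  linarith

lemma norm_sub_le_norm_add_conj_mul_exp {z a : ℂ} (h : z + conj a ≠ 0) :
    ‖z - a‖ ≤ ‖z + conj a‖ * Real.exp (-(2 * z.re * (a.re / ‖z + conj a‖ ^ 2))) := by
  set p := ‖z + conj a‖
  have hp : 0 < p := norm_pos_iff.mpr h
  set u := 4 * z.re * (a.re / p ^ 2)
  have hpu : p ^ 2 * u = 4 * z.re * a.re := by simp only [u]; field_simp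
  rw [← sq_le_sq₀ (norm_nonneg _) (by positivity), mul_pow, ← Real.exp_nat_mul]
  have hexp : (2 : ℕ) * -(2 * z.re * (a.re / p ^ 2)) = -u := by push_cast; ring
  rw [hexp]
  calc ‖z - a‖ ^ 2 = p ^ 2 * (1 - u) := by rw [mul_sub, hpu, norm_add_conj_sq]; ring
    _ ≤ p ^ 2 * Real.exp (-u) := by
        gcongr
        linarith [Real.add_one_le_exp (-u)]

lemma re_inv_le_mul_re_div_norm_add_conj_sq {z a : ℂ} {ε : ℝ} (hε : 0 < ε) (hεa : ε ≤ ‖a‖)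
    (ha : 0 ≤ a.re) (hza : z + conj a ≠ 0) :
    (a⁻¹).re ≤ (‖z‖ / ε + 1) ^ 2 * (a.re / ‖z + conj a‖ ^ 2) := by
  set C := ‖z‖ / ε + 1
  have hC : 0 < C := by positivity
  have hp : ‖z + conj a‖ ≤ C * ‖a‖ := calc
    ‖z + conj a‖ ≤ ‖z‖ + ‖a‖ := by simpa using norm_add_le z (conj a)
    _ ≤ ‖z‖ / ε * ‖a‖ + ‖a‖ := by
        gcongr
        rw [div_mul_eq_mul_div, le_div_iff₀ hε]
        gcongr
    _ = C * ‖a‖ := by ring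
  calc (a⁻¹).re = C ^ 2 * a.re / (C * ‖a‖) ^ 2 := by
        rw [inv_re, normSq_eq_norm_sq]
        field_simp
    _ ≤ C ^ 2 * a.re / ‖z + conj a‖ ^ 2 := by gcongr
    _ = C ^ 2 * (a.re / ‖z + conj a‖ ^ 2) := by ring

lemma not_summable_re_div_norm_add_conj_sq {d : ℕ → ℂ} {ε : ℝ} (hε : 0 < ε)
    (hεd : ∀ n, ε ≤ ‖d n‖) (hre : ∀ n, 0 ≤ (d n).re) (hdiv : ¬Summable fun n => ((d n)⁻¹).re)
    {z : ℂ} (hz : 0 < z.re) : ¬Summable fun n => (d n).re / ‖z + conj (d n)‖ ^ 2 := fun hs =>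
  hdiv <| (hs.mul_left _).of_nonneg_of_le
    (fun n => by rw [inv_re]; exact div_nonneg (hre n) (normSq_nonneg _))
    fun n => re_inv_le_mul_re_div_norm_add_conj_sq hε (hεd n) (hre n)
      (add_conj_ne_zero hz (hre n))

/-- `f` divided by the Blaschke factor `(z - a) / (z + conj a)` of the right half-plane,
with the singularity at `a` removed. -/
noncomputable def blaschkeQuotient (f : ℂ → ℂ) (a : ℂ) (z : ℂ) : ℂ :=
  dslope f a z * (z + conj a)

lemma blaschkeQuotient_mul_sub {f : ℂ → ℂ} {a : ℂ} (hfa : f a = 0) (z : ℂ) :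
    blaschkeQuotient f a z * (z - a) = f z * (z + conj a) := by
  have := sub_smul_dslope f a z
  rw [smul_eq_mul, hfa, sub_zero] at this
  rw [blaschkeQuotient, ← this]
  ring

lemma differentiableOn_blaschkeQuotient {f : ℂ → ℂ} {a : ℂ} {s : Set ℂ} (hs : s ∈ 𝓝 a)
    (hf : DifferentiableOn ℂ f s) : DifferentiableOn ℂ (blaschkeQuotient f a) s :=
  ((differentiableOn_dslope hs).mpr hf).mul (differentiableOn_id.add_const _)

lemma norm_blaschkeQuotient_le_of_re_mul_re_le {f : ℂ → ℂ} {a z : ℂ} {M δ : ℝ} (hfa : f a = 0)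
    (hfz : ‖f z‖ ≤ M) (hz : 0 < z.re) (ha : 0 < a.re) (hδ : 0 ≤ δ)
    (h : 4 * z.re * a.re ≤ δ * ‖z - a‖ ^ 2) : ‖blaschkeQuotient f a z‖ ≤ M * (1 + δ) := by
  have hza : 0 < ‖z - a‖ := by
    by_contra! h0
    rw [le_antisymm h0 (norm_nonneg _)] at h
    nlinarith [mul_pos hz ha]
  refine le_of_mul_le_mul_right ?_ hza
  calc ‖blaschkeQuotient f a z‖ * ‖z - a‖ = ‖f z‖ * ‖z + conj a‖ := by
        rw [← norm_mul, ← norm_mul, blaschkeQuotient_mul_sub hfa]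
    _ ≤ M * ((1 + δ) * ‖z - a‖) :=
        mul_le_mul hfz (norm_add_conj_le_of_re_mul_re_le hδ h) (norm_nonneg _)
          ((norm_nonneg _).trans hfz)
    _ = M * (1 + δ) * ‖z - a‖ := by ring

section RightHalfPlane

variable {f : ℂ → ℂ} {M : ℝ}

lemma norm_blaschkeQuotient_le_mul_one_add (hf : DifferentiableOn ℂ f {z | 0 < z.re})
    (hM : ∀ z : ℂ, 0 < z.re → ‖f z‖ ≤ M) {a : ℂ} (ha : 0 < a.re) (hfa : f a = 0) {δ : ℝ}
    (hδ : 0 < δ) {z₀ : ℂ} (hz₀ : 0 < z₀.re) : ‖blaschkeQuotient f a z₀‖ ≤ M * (1 + δ) := by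
  set η := min (z₀.re / 2) (min (a.re / 2) (δ * a.re / 16))
  have hη : 0 < η := lt_min (by linarith) (lt_min (by linarith) (by positivity))
  have hηa : η ≤ a.re / 2 := (min_le_right _ _).trans (min_le_left _ _)
  have hηδ : η ≤ δ * a.re / 16 := (min_le_right _ _).trans (min_le_right _ _)
  set R := ‖z₀‖ + 2 * ‖a‖ + 16 * a.re / δ + 1
  have hR : 0 < R := by positivity
  have hquot : 0 ≤ 16 * a.re / δ := by positivity
  have hRδ : 16 * a.re ≤ δ * R :=
    (div_le_iff₀' hδ).mp (by linarith [norm_nonneg z₀, norm_nonneg a])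
  set U := {z : ℂ | η < z.re} ∩ ball 0 R
  have hclosure : closure U ⊆ {z | 0 < z.re} := fun z hz => by
    have := closure_inter_subset_inter_closure _ _ hz |>.1
    rw [closure_setOfPred_lt_re] at this
    exact hη.trans_le this
  have hdiff : DiffContOnCl ℂ (blaschkeQuotient f a) U :=
    ((differentiableOn_blaschkeQuotient
      ((isOpen_lt continuous_const continuous_re).mem_nhds ha) hf).mono
      hclosure).diffContOnCl
  have hfrontier : ∀ z ∈ frontier U, ‖blaschkeQuotient f a z‖ ≤ M * (1 + δ) := by
    intro z hz
    have hzre : η ≤ z.re := by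
      have := (frontier_subset_closure.trans (closure_inter_subset_inter_closure _ _)) hz |>.1
      rwa [closure_setOfPred_lt_re] at this
    have hzpos : 0 < z.re := hη.trans_le hzre
    refine norm_blaschkeQuotient_le_of_re_mul_re_le hfa (hM z hzpos) hzpos ha hδ.le ?_
    rcases frontier_inter_subset _ _ hz with ⟨hline, -⟩ | ⟨-, hcircle⟩
    · rw [frontier_setOfPred_lt_re] at hline
      exact re_mul_re_le_of_re_eq hδ.le hη.le hηa hηδ hline
    · rw [frontier_ball 0 hR.ne', mem_sphere_zero_iff_norm] at hcircle
      exact re_mul_re_le_of_norm_eq hδ.le ha.le (by linarith [norm_nonneg z₀]) hRδ hcircle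
  have hz₀U : z₀ ∈ U := ⟨(min_le_left _ _).trans_lt (half_lt_self hz₀),
    mem_ball_zero_iff.mpr (by linarith [norm_nonneg a])⟩
  exact norm_le_of_forall_mem_frontier_norm_le (isBounded_ball.subset inter_subset_right) hdiff
    hfrontier (subset_closure hz₀U)

lemma norm_blaschkeQuotient_le (hf : DifferentiableOn ℂ f {z | 0 < z.re})
    (hM : ∀ z : ℂ, 0 < z.re → ‖f z‖ ≤ M) {a : ℂ} (ha : 0 < a.re) (hfa : f a = 0) {z : ℂ}
    (hz : 0 < z.re) : ‖blaschkeQuotient f a z‖ ≤ M := by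
  have hlim : Tendsto (fun δ : ℝ => M * (1 + δ)) (𝓝[>] 0) (𝓝 M) := by
    have : Continuous fun δ : ℝ => M * (1 + δ) := by fun_prop
    simpa using (this.tendsto 0).mono_left nhdsWithin_le_nhds
  refine ge_of_tendsto hlim ?_
  filter_upwards [self_mem_nhdsWithin] with δ hδ
  exact norm_blaschkeQuotient_le_mul_one_add hf hM ha hfa hδ hz

lemma norm_mul_prod_norm_add_conj_le (hf : DifferentiableOn ℂ f {z | 0 < z.re})
    (hM : ∀ z : ℂ, 0 < z.re → ‖f z‖ ≤ M) {s : Finset ℂ} (hs : ∀ a ∈ s, 0 < a.re ∧ f a = 0)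
    {z : ℂ} (hz : 0 < z.re) : ‖f z‖ * ∏ a ∈ s, ‖z + conj a‖ ≤ M * ∏ a ∈ s, ‖z - a‖ := by
  induction s using Finset.induction_on generalizing f with
  | empty => simpa using hM z hz
  | insert a s has ih =>
    obtain ⟨ha, hfa⟩ := hs a (mem_insert_self a s)
    have hg : ∀ b ∈ s, 0 < b.re ∧ blaschkeQuotient f a b = 0 := fun b hbs => by
      obtain ⟨hb, hfb⟩ := hs b (mem_insert_of_mem hbs)
      have hba : b - a ≠ 0 := sub_ne_zero.mpr (ne_of_mem_of_not_mem hbs has)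
      refine ⟨hb, (mul_eq_zero.mp ?_).resolve_right hba⟩
      rw [blaschkeQuotient_mul_sub hfa, hfb, zero_mul]
    have hquotient := ih (differentiableOn_blaschkeQuotient
      ((isOpen_lt continuous_const continuous_re).mem_nhds ha) hf)
      (fun z hz => norm_blaschkeQuotient_le hf hM ha hfa hz) hg
    calc ‖f z‖ * ∏ b ∈ insert a s, ‖z + conj b‖
        = ‖blaschkeQuotient f a z‖ * (∏ b ∈ s, ‖z + conj b‖) * ‖z - a‖ := by
          rw [prod_insert has, ← mul_assoc, ← norm_mul, ← blaschkeQuotient_mul_sub hfa, norm_mul]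
          ring
      _ ≤ M * (∏ b ∈ s, ‖z - b‖) * ‖z - a‖ := by gcongr
      _ = M * ∏ b ∈ insert a s, ‖z - b‖ := by rw [prod_insert has]; ring

lemma norm_le_mul_exp_neg_sum (hf : DifferentiableOn ℂ f {z | 0 < z.re})
    (hM : ∀ z : ℂ, 0 < z.re → ‖f z‖ ≤ M) {s : Finset ℂ} (hs : ∀ a ∈ s, 0 < a.re ∧ f a = 0)
    {z : ℂ} (hz : 0 < z.re) :
    ‖f z‖ ≤ M * Real.exp (-(2 * z.re * ∑ a ∈ s, a.re / ‖z + conj a‖ ^ 2)) := by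
  have hza : ∀ a ∈ s, z + conj a ≠ 0 := fun a ha => add_conj_ne_zero hz (hs a ha).1.le
  have hp : 0 < ∏ a ∈ s, ‖z + conj a‖ := prod_pos fun a ha => norm_pos_iff.mpr (hza a ha)
  refine le_of_mul_le_mul_right ?_ hp
  calc ‖f z‖ * ∏ a ∈ s, ‖z + conj a‖ ≤ M * ∏ a ∈ s, ‖z - a‖ :=
        norm_mul_prod_norm_add_conj_le hf hM hs hz
    _ ≤ M * ∏ a ∈ s, ‖z + conj a‖ * Real.exp (-(2 * z.re * (a.re / ‖z + conj a‖ ^ 2))) := by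
        have hM0 : 0 ≤ M := (norm_nonneg _).trans (hM z hz)
        gcongr with a ha
        exact norm_sub_le_norm_add_conj_mul_exp (hza a ha)
    _ = M * Real.exp (-(2 * z.re * ∑ a ∈ s, a.re / ‖z + conj a‖ ^ 2)) *
          ∏ a ∈ s, ‖z + conj a‖ := by
        rw [prod_mul_distrib, ← Real.exp_sum, mul_sum, ← sum_neg_distrib]
        ring

end RightHalfPlane

/-- A bounded analytic function on the open right half-plane vanishing on a sequence of
pairwise distinct points `dₙ` with `inf ‖dₙ‖ > 0` and `∑ₙ Re(1/dₙ) = ∞` vanishes identically. -/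
theorem vanish_of_blaschke (f : ℂ → ℂ)
    (hf : DifferentiableOn ℂ f {z : ℂ | 0 < z.re})
    (hbd : ∃ M : ℝ, ∀ z : ℂ, 0 < z.re → ‖f z‖ ≤ M)
    (d : ℕ → ℂ) (hinj : Function.Injective d)
    (hre : ∀ n, 0 < (d n).re)
    (hinf : ∃ ε : ℝ, 0 < ε ∧ ∀ n, ε ≤ ‖d n‖)
    (hdiv : ¬ Summable fun n => ((d n)⁻¹).re)
    (hzero : ∀ n, f (d n) = 0) :
    ∀ z : ℂ, 0 < z.re → f z = 0 := by
  obtain ⟨M, hM⟩ := hbd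
  obtain ⟨ε, hε, hεd⟩ := hinf
  intro z hz
  set S : ℕ → ℝ := fun N => ∑ k ∈ range N, (d k).re / ‖z + conj (d k)‖ ^ 2
  have hS : Tendsto S atTop atTop :=
    (not_summable_iff_tendsto_nat_atTop_of_nonneg fun k => div_nonneg (hre k).le (sq_nonneg _)).mp
      (not_summable_re_div_norm_add_conj_sq hε hεd (fun n => (hre n).le) hdiv hz)
  have hbound : ∀ N, ‖f z‖ ≤ M * Real.exp (-(2 * z.re * S N)) := fun N => by
    have := norm_le_mul_exp_neg_sum hf hM (s := (range N).image d) (by simp [hre, hzero]) hz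
    rwa [sum_image hinj.injOn] at this
  have hlim : Tendsto (fun N => M * Real.exp (-(2 * z.re * S N))) atTop (𝓝 0) := by
    simpa using (Real.tendsto_exp_atBot.comp (tendsto_neg_atTop_atBot.comp
      (hS.const_mul_atTop (by positivity)))).const_mul M
  exact norm_le_zero_iff.mp (ge_of_tendsto' hlim hbound)
end

section
/- Let F and G be nonzero bounded analytic functions on the half-plane {z ∈ ℂ : Re z > 2}. If there exists p ∈ ℕ with p ≥ 1 such that F(z)·G(z+p) = F(z+p)·G(z) for all z with Re z > 2, then there is a constant c ∈ ℂ with F = c·G on the half-plane. -/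
/-!
Iterating the relation, and cancelling common factors by the identity theorem, gives
`F(z₀ + n p) G(z₀) = F(z₀) G(z₀ + n p)` for all `n`. So for `c = F(z₀) / G(z₀)` the bounded
analytic function `F - c G` vanishes along the progression `z₀ + n p`. A Cayley transform carries
the half-plane to the unit disc and these zeros to points `bₙ` with `∑ (1 - ‖bₙ‖) = ∞`. Dividing
out the Blaschke factors `(w - bₙ) / (1 - b̄ₙ w)` one at a time (maximum modulus principle)
bounds `‖F - c G‖` by `M` times the product of their norms, and this product tends to `0`.
-/

open Set Metric Filter Topology ComplexConjugate

noncomputable def blaschkeFactor (b w : ℂ) : ℂ := (w - b) / (1 - conj b * w)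

theorem sq_norm_one_sub_conj_mul_sub_sq_norm_sub (b w : ℂ) :
    ‖1 - conj b * w‖ ^ 2 - ‖w - b‖ ^ 2 = (1 - ‖w‖ ^ 2) * (1 - ‖b‖ ^ 2) := by
  simp only [Complex.sq_norm, Complex.normSq_apply, Complex.sub_re, Complex.sub_im,
    Complex.mul_re, Complex.mul_im, Complex.conj_re, Complex.conj_im, Complex.one_re,
    Complex.one_im]
  ring

theorem one_sub_conj_mul_ne_zero {b w : ℂ} (hb : ‖b‖ < 1) (hw : ‖w‖ ≤ 1) :
    1 - conj b * w ≠ 0 := by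
  rw [sub_ne_zero]
  refine fun h => (?_ : ‖conj b * w‖ < 1).ne ?_
  · rw [norm_mul, Complex.norm_conj]
    nlinarith [norm_nonneg b, norm_nonneg w]
  · rw [← h, norm_one]

theorem blaschkeFactor_ne_zero {b w : ℂ} (hb : ‖b‖ < 1) (hw : ‖w‖ ≤ 1) (hwb : w ≠ b) :
    blaschkeFactor b w ≠ 0 :=
  div_ne_zero (sub_ne_zero.2 hwb) (one_sub_conj_mul_ne_zero hb hw)

theorem norm_blaschkeFactor_le_exp {b w : ℂ} (hb : ‖b‖ < 1) (hw : ‖w‖ < 1) :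
    ‖blaschkeFactor b w‖ ≤ Real.exp (-((1 - ‖w‖ ^ 2) / 8 * (1 - ‖b‖))) := by
  have hden : 0 < ‖1 - conj b * w‖ := norm_pos_iff.2 (one_sub_conj_mul_ne_zero hb hw.le)
  have hden2 : ‖1 - conj b * w‖ ≤ 2 := by
    calc ‖1 - conj b * w‖ ≤ ‖(1 : ℂ)‖ + ‖conj b * w‖ := norm_sub_le _ _
      _ ≤ 2 := by
        rw [norm_one, norm_mul, Complex.norm_conj]
        nlinarith [norm_nonneg b, norm_nonneg w]
  have hid := sq_norm_one_sub_conj_mul_sub_sq_norm_sub b w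
  set S := (1 - ‖w‖ ^ 2) * (1 - ‖b‖)
  have hS : S ≤ (1 - ‖w‖ ^ 2) * (1 - ‖b‖ ^ 2) :=
    mul_le_mul_of_nonneg_left (by nlinarith [norm_nonneg b]) (by nlinarith [norm_nonneg w])
  -- `‖blaschkeFactor b w‖² = 1 - (1 - ‖w‖²)(1 - ‖b‖²) / ‖1 - b̄w‖²` and `‖1 - b̄w‖ ≤ 2`
  have hsq : ‖blaschkeFactor b w‖ ^ 2 ≤ 1 - S / 4 := by
    rw [blaschkeFactor, norm_div, div_pow, div_le_iff₀ (by positivity)]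
    nlinarith [mul_le_mul_of_nonneg_left (pow_le_pow_left₀ hden.le hden2 2)
      (mul_nonneg (by nlinarith [norm_nonneg w] : (0:ℝ) ≤ 1 - ‖w‖ ^ 2)
        (by nlinarith [norm_nonneg b] : (0:ℝ) ≤ 1 - ‖b‖))]
  refine le_of_pow_le_pow_left₀ two_ne_zero (Real.exp_nonneg _) ?_
  rw [← Real.exp_nat_mul]
  calc ‖blaschkeFactor b w‖ ^ 2 ≤ 1 - S / 4 := hsq
    _ ≤ Real.exp (-(S / 4)) := by linarith [Real.add_one_le_exp (-(S / 4))]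
    _ = _ := by congr 1; simp only [S]; push_cast; ring

theorem div_le_norm_blaschkeFactor {b z : ℂ} {r : ℝ} (hb : ‖b‖ < r) (hr : r ≤ 1)
    (hz : ‖z‖ = r) : (r - ‖b‖) / (1 - ‖b‖ * r) ≤ ‖blaschkeFactor b z‖ := by
  have hb1 : ‖b‖ < 1 := hb.trans_le hr
  have hβr : ‖b‖ * r < 1 := by nlinarith [norm_nonneg b]
  have hden : 1 - ‖b‖ * r ≤ ‖1 - conj b * z‖ := by
    calc 1 - ‖b‖ * r = ‖(1 : ℂ)‖ - ‖conj b * z‖ := by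
          rw [norm_one, norm_mul, Complex.norm_conj, hz]
      _ ≤ ‖1 - conj b * z‖ := norm_sub_norm_le _ _
  have hid := sq_norm_one_sub_conj_mul_sub_sq_norm_sub b z
  rw [hz] at hid
  rw [blaschkeFactor, norm_div, div_le_div_iff₀ (by linarith) (by linarith)]
  refine le_of_pow_le_pow_left₀ two_ne_zero (by positivity) ?_
  have h1r : 0 ≤ 1 - r ^ 2 := by nlinarith [norm_nonneg b]
  have h1b : 0 ≤ 1 - ‖b‖ ^ 2 := by nlinarith [norm_nonneg b]
  -- `(1 - ‖b‖ r)² - (r - ‖b‖)² = (1 - r²)(1 - ‖b‖²)`, so this reduces to `hden`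
  nlinarith [mul_le_mul_of_nonneg_left (pow_le_pow_left₀ (by linarith) hden 2)
    (mul_nonneg h1r h1b)]

theorem norm_le_of_eventually_sphere_le {g : ℂ → ℂ} (hg : DifferentiableOn ℂ g (ball 0 1))
    {B : ℝ → ℝ} {M : ℝ} (hB : Tendsto B (𝓝[<] 1) (𝓝 M))
    (hle : ∀ᶠ r in 𝓝[<] 1, ∀ z : ℂ, ‖z‖ = r → ‖g z‖ ≤ B r) {w : ℂ} (hw : ‖w‖ < 1) :
    ‖g w‖ ≤ M := by
  refine ge_of_tendsto hB ?_
  filter_upwards [hle, Ioo_mem_nhdsLT hw] with r hr hwr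
  have hr0 : r ≠ 0 := ((norm_nonneg w).trans_lt hwr.1).ne'
  refine Complex.norm_le_of_forall_mem_frontier_norm_le isBounded_ball
    (hg.diffContOnCl_ball (closedBall_subset_ball hwr.2)) (fun z hz => hr z ?_)
    (subset_closure (mem_ball_zero_iff.2 hwr.1))
  rwa [frontier_ball 0 hr0, mem_sphere_zero_iff_norm] at hz

theorem exists_eq_blaschkeFactor_mul {f : ℂ → ℂ} {M : ℝ} (hf : DifferentiableOn ℂ f (ball 0 1))
    (hM : ∀ w ∈ ball (0 : ℂ) 1, ‖f w‖ ≤ M) {b : ℂ} (hb : ‖b‖ < 1) (hfb : f b = 0) :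
    ∃ g : ℂ → ℂ, DifferentiableOn ℂ g (ball 0 1) ∧ (∀ w ∈ ball (0 : ℂ) 1, ‖g w‖ ≤ M) ∧
      ∀ w ∈ ball (0 : ℂ) 1, f w = blaschkeFactor b w * g w := by
  set g : ℂ → ℂ := fun w => (1 - conj b * w) * dslope f b w
  have hg : DifferentiableOn ℂ g (ball 0 1) :=
    ((differentiableOn_const 1).sub ((differentiableOn_const _).mul differentiableOn_id)).mul
      ((Complex.differentiableOn_dslope (isOpen_ball.mem_nhds (mem_ball_zero_iff.2 hb))).2 hf)
  have hfg : ∀ w ∈ ball (0 : ℂ) 1, f w = blaschkeFactor b w * g w := by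
    intro w hw
    have hden := one_sub_conj_mul_ne_zero hb (mem_ball_zero_iff.1 hw).le
    have hslope := sub_smul_dslope f b w
    rw [hfb, sub_zero, smul_eq_mul] at hslope
    rw [blaschkeFactor, ← hslope, div_mul_eq_mul_div, eq_div_iff hden]
    ring
  clear_value g
  refine ⟨g, hg, fun w hw => ?_, hfg⟩
  -- On `‖z‖ = r`, `‖g z‖ = ‖f z‖ / ‖blaschkeFactor b z‖ ≤ M / ((r - ‖b‖) / (1 - ‖b‖ r))`,
  -- which tends to `M` as `r → 1`.
  refine norm_le_of_eventually_sphere_le hg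
    (B := fun r => M / ((r - ‖b‖) / (1 - ‖b‖ * r))) ?_ ?_ (mem_ball_zero_iff.1 hw)
  · have hb' : 1 - ‖b‖ ≠ 0 := (sub_pos.2 hb).ne'
    have hcont : ContinuousAt (fun r : ℝ => M / ((r - ‖b‖) / (1 - ‖b‖ * r))) 1 := by
      refine continuousAt_const.div ((continuousAt_id.sub continuousAt_const).div
        (continuousAt_const.sub (continuousAt_const.mul continuousAt_id)) ?_) ?_ <;>
        simp [hb']
    simpa [div_self hb'] using hcont.tendsto.mono_left nhdsWithin_le_nhds
  · filter_upwards [Ioo_mem_nhdsLT hb] with r hr z hz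
    have hz1 : z ∈ ball (0 : ℂ) 1 := mem_ball_zero_iff.2 (hz.trans_lt hr.2)
    have hφ := div_le_norm_blaschkeFactor hr.1 hr.2.le hz
    have hpos : 0 < (r - ‖b‖) / (1 - ‖b‖ * r) :=
      div_pos (sub_pos.2 hr.1) (by nlinarith [norm_nonneg b, hr.2])
    rw [le_div_iff₀ hpos]
    calc ‖g z‖ * ((r - ‖b‖) / (1 - ‖b‖ * r)) ≤ ‖g z‖ * ‖blaschkeFactor b z‖ :=
          mul_le_mul_of_nonneg_left hφ (norm_nonneg _)
      _ = ‖f z‖ := by rw [hfg z hz1, norm_mul]; ring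
      _ ≤ M := hM z hz1

theorem exists_eq_prod_blaschkeFactor_mul {f : ℂ → ℂ} {M : ℝ}
    (hf : DifferentiableOn ℂ f (ball 0 1)) (hM : ∀ w ∈ ball (0 : ℂ) 1, ‖f w‖ ≤ M)
    (s : Finset ℂ) (hs : ∀ b ∈ s, ‖b‖ < 1 ∧ f b = 0) :
    ∃ g : ℂ → ℂ, DifferentiableOn ℂ g (ball 0 1) ∧ (∀ w ∈ ball (0 : ℂ) 1, ‖g w‖ ≤ M) ∧
      ∀ w ∈ ball (0 : ℂ) 1, f w = (∏ b ∈ s, blaschkeFactor b w) * g w := by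
  induction s using Finset.induction_on with
  | empty => exact ⟨f, hf, hM, by simp⟩
  | insert a s ha ih =>
    obtain ⟨ha1, hfa⟩ := hs a (Finset.mem_insert_self a s)
    obtain ⟨g, hg, hgM, hfg⟩ := ih fun b hb => hs b (Finset.mem_insert_of_mem hb)
    have hprod : ∏ b ∈ s, blaschkeFactor b a ≠ 0 := Finset.prod_ne_zero_iff.2 fun b hb =>
      blaschkeFactor_ne_zero (hs b (Finset.mem_insert_of_mem hb)).1 ha1.le
        (ne_of_mem_of_not_mem hb ha).symm
    have hga : g a = 0 := by
      simpa [hfa, hprod] using (hfg a (mem_ball_zero_iff.2 ha1)).symm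
    obtain ⟨g', hg', hg'M, hgg'⟩ := exists_eq_blaschkeFactor_mul hg hgM ha1 hga
    refine ⟨g', hg', hg'M, fun w hw => ?_⟩
    rw [hfg w hw, hgg' w hw, Finset.prod_insert ha]
    ring

theorem eqOn_zero_of_not_summable_one_sub_norm {f : ℂ → ℂ} {M : ℝ}
    (hf : DifferentiableOn ℂ f (ball 0 1)) (hM : ∀ w ∈ ball (0 : ℂ) 1, ‖f w‖ ≤ M)
    {b : ℕ → ℂ} (hb : ∀ n, ‖b n‖ < 1) (hb_inj : Function.Injective b)
    (hfb : ∀ n, f (b n) = 0) (hdiv : ¬Summable fun n => 1 - ‖b n‖) :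
    EqOn f 0 (ball 0 1) := by
  intro w hw
  have hw1 := mem_ball_zero_iff.1 hw
  set κ := (1 - ‖w‖ ^ 2) / 8
  have hκ : 0 < κ := div_pos (by nlinarith [norm_nonneg w]) (by norm_num)
  have hbound : ∀ N, ‖f w‖ ≤ M * Real.exp (-(κ * ∑ n ∈ Finset.range N, (1 - ‖b n‖))) := by
    intro N
    obtain ⟨g, -, hgM, hfg⟩ := exists_eq_prod_blaschkeFactor_mul hf hM
      ((Finset.range N).image b) (by simp [hb, hfb])
    calc ‖f w‖ = (∏ n ∈ Finset.range N, ‖blaschkeFactor (b n) w‖) * ‖g w‖ := by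
          rw [hfg w hw, norm_mul, norm_prod, Finset.prod_image hb_inj.injOn]
      _ ≤ (∏ n ∈ Finset.range N, Real.exp (-(κ * (1 - ‖b n‖)))) * M :=
          mul_le_mul (Finset.prod_le_prod (fun _ _ => norm_nonneg _)
            fun n _ => norm_blaschkeFactor_le_exp (hb n) hw1) (hgM w hw) (norm_nonneg _)
            (Finset.prod_nonneg fun _ _ => (Real.exp_pos _).le)
      _ = M * Real.exp (-(κ * ∑ n ∈ Finset.range N, (1 - ‖b n‖))) := by
          rw [← Real.exp_sum, Finset.mul_sum, ← Finset.sum_neg_distrib, mul_comm]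
  have hsum := (not_summable_iff_tendsto_nat_atTop_of_nonneg
    fun n => sub_nonneg.2 (hb n).le).1 hdiv
  have htend : Tendsto (fun N => M * Real.exp (-(κ * ∑ n ∈ Finset.range N, (1 - ‖b n‖))))
      atTop (𝓝 0) := by
    simpa using ((Real.tendsto_exp_atBot.comp
      (tendsto_neg_atTop_atBot.comp (hsum.const_mul_atTop hκ))).const_mul M)
  exact norm_le_zero_iff.1 (ge_of_tendsto htend (Eventually.of_forall hbound))

noncomputable def halfPlaneToDisc (a : ℝ) (z : ℂ) : ℂ := (z - a - 1) / (z - a + 1)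

noncomputable def discToHalfPlane (a : ℝ) (w : ℂ) : ℂ := a + (1 + w) / (1 - w)

theorem one_sub_sq_norm_halfPlaneToDisc {a : ℝ} {z : ℂ} (hz : a < z.re) :
    1 - ‖halfPlaneToDisc a z‖ ^ 2 = 4 * (z.re - a) / ((z.re - a + 1) ^ 2 + z.im ^ 2) := by
  have hpos : 0 < (z.re - a + 1) ^ 2 + z.im ^ 2 := by nlinarith [sq_nonneg z.im]
  have hnum : Complex.normSq (z - a - 1) = (z.re - a + 1) ^ 2 + z.im ^ 2 - 4 * (z.re - a) := by
    simp [Complex.normSq_apply]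
    ring
  have hden : Complex.normSq (z - a + 1) = (z.re - a + 1) ^ 2 + z.im ^ 2 := by
    simp [Complex.normSq_apply]
    ring
  rw [halfPlaneToDisc, norm_div, div_pow, Complex.sq_norm, Complex.sq_norm, hnum, hden]
  field_simp
  ring

theorem norm_halfPlaneToDisc_lt_one {a : ℝ} {z : ℂ} (hz : a < z.re) :
    ‖halfPlaneToDisc a z‖ < 1 := by
  have h := one_sub_sq_norm_halfPlaneToDisc hz
  have : 0 < 4 * (z.re - a) / ((z.re - a + 1) ^ 2 + z.im ^ 2) := by
    apply div_pos <;> nlinarith [sq_nonneg z.im]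
  nlinarith [norm_nonneg (halfPlaneToDisc a z)]

theorem discToHalfPlane_halfPlaneToDisc {a : ℝ} {z : ℂ} (hz : a < z.re) :
    discToHalfPlane a (halfPlaneToDisc a z) = z := by
  have hz1 : z - a + 1 ≠ 0 := fun h => by
    have := congrArg Complex.re h
    simp at this
    linarith
  rw [discToHalfPlane, halfPlaneToDisc]
  field_simp
  ring

theorem re_discToHalfPlane_gt {a : ℝ} {w : ℂ} (hw : ‖w‖ < 1) :
    a < (discToHalfPlane a w).re := by
  have hw1 : 1 - w ≠ 0 := sub_ne_zero.2 fun h => by simp [← h] at hw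
  have hre : ((1 + w) / (1 - w)).re = (1 - ‖w‖ ^ 2) / Complex.normSq (1 - w) := by
    rw [Complex.div_re, Complex.sq_norm, Complex.normSq_apply w]
    simp only [Complex.add_re, Complex.add_im, Complex.sub_re, Complex.sub_im,
      Complex.one_re, Complex.one_im]
    ring
  have : 0 < ((1 + w) / (1 - w)).re := by
    rw [hre]
    exact div_pos (by nlinarith [norm_nonneg w]) (Complex.normSq_pos.2 hw1)
  simpa [discToHalfPlane] using this

theorem differentiableOn_discToHalfPlane (a : ℝ) :
    DifferentiableOn ℂ (discToHalfPlane a) (ball 0 1) := by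
  intro w hw
  have hw1 : 1 - w ≠ 0 := sub_ne_zero.2 fun h => by simp [← h] at hw
  unfold discToHalfPlane
  fun_prop (disch := exact hw1)

theorem not_summable_one_sub_norm_halfPlaneToDisc {a d : ℝ} {z₀ : ℂ} (hz₀ : a < z₀.re)
    (hd : 0 < d) : ¬Summable fun n : ℕ => 1 - ‖halfPlaneToDisc a (z₀ + n * d)‖ := by
  set u := z₀.re - a
  set m := min u d
  set D := (u + d + 1) ^ 2 + z₀.im ^ 2
  have hu : 0 < u := sub_pos.2 hz₀
  have hm : 0 < m := lt_min hu hd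
  have hD : 0 < D := by positivity
  -- `1 - ‖b‖ ≥ (1 - ‖b‖²) / 2`, which is of order `1 / n` along the progression
  have hlow : ∀ n : ℕ, 2 * m / D * (1 / (n + 1)) ≤ 1 - ‖halfPlaneToDisc a (z₀ + n * d)‖ := by
    intro n
    have hn : (0 : ℝ) ≤ n := n.cast_nonneg
    have hre : (z₀ + n * d).re - a = u + n * d := by simp [u]; ring
    have hz : a < (z₀ + n * d).re := by linarith [mul_nonneg hn hd.le]
    have hsq := one_sub_sq_norm_halfPlaneToDisc hz
    rw [hre, show (z₀ + n * d).im = z₀.im by simp] at hsq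
    have hv : m * (n + 1) ≤ u + n * d := by nlinarith [min_le_left u d, min_le_right u d]
    have hv' : u + n * d + 1 ≤ (u + d + 1) * (n + 1) := by nlinarith
    have hden : (u + n * d + 1) ^ 2 + z₀.im ^ 2 ≤ D * (n + 1) ^ 2 := by
      nlinarith [pow_le_pow_left₀ (by positivity) hv' 2, mul_nonneg (sq_nonneg z₀.im)
        (by positivity : (0 : ℝ) ≤ n ^ 2 + 2 * n)]
    calc 2 * m / D * (1 / (n + 1)) ≤ 2 * (u + n * d) / ((u + n * d + 1) ^ 2 + z₀.im ^ 2) := by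
          rw [div_mul_div_comm, mul_one, div_le_div_iff₀ (by positivity) (by positivity)]
          nlinarith [mul_le_mul_of_nonneg_left hden hm.le,
            mul_le_mul_of_nonneg_right hv (by positivity : 0 ≤ D * (n + 1))]
      _ = (1 - ‖halfPlaneToDisc a (z₀ + n * d)‖ ^ 2) / 2 := by rw [hsq]; ring
      _ ≤ 1 - ‖halfPlaneToDisc a (z₀ + n * d)‖ := by
          nlinarith [norm_nonneg (halfPlaneToDisc a (z₀ + n * d)), norm_halfPlaneToDisc_lt_one hz]
  intro hsum
  have hharm : Summable fun n : ℕ => 2 * m / D * (1 / ((n : ℝ) + 1)) :=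
    hsum.of_nonneg_of_le (fun n => by positivity) hlow
  rw [summable_mul_left_iff (by positivity)] at hharm
  exact Real.not_summable_one_div_natCast ((summable_nat_add_iff 1).1 (by exact_mod_cast hharm))

theorem eqOn_zero_of_eq_zero_add_nat_mul {a d M : ℝ} {E : ℂ → ℂ}
    (hE : DifferentiableOn ℂ E {z | a < z.re}) (hM : ∀ z : ℂ, a < z.re → ‖E z‖ ≤ M)
    {z₀ : ℂ} (hz₀ : a < z₀.re) (hd : 0 < d) (hzero : ∀ n : ℕ, E (z₀ + n * d) = 0) :
    EqOn E 0 {z | a < z.re} := by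
  have hre : ∀ n : ℕ, a < (z₀ + n * d).re := fun n => by
    simpa using add_lt_add_of_lt_of_le hz₀ (mul_nonneg n.cast_nonneg hd.le)
  have hinj : Function.Injective fun n : ℕ => halfPlaneToDisc a (z₀ + n * d) := by
    intro m n hmn
    have := congrArg (discToHalfPlane a) hmn
    simp only [discToHalfPlane_halfPlaneToDisc (hre _), add_right_inj] at this
    exact_mod_cast mul_right_cancel₀ (Complex.ofReal_ne_zero.2 hd.ne') this
  have hdisc := eqOn_zero_of_not_summable_one_sub_norm
    (hE.comp (differentiableOn_discToHalfPlane a) fun w hw =>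
      re_discToHalfPlane_gt (mem_ball_zero_iff.1 hw))
    (fun w hw => hM _ (re_discToHalfPlane_gt (mem_ball_zero_iff.1 hw)))
    (fun n => norm_halfPlaneToDisc_lt_one (hre n)) hinj
    (fun n => by simp [discToHalfPlane_halfPlaneToDisc (hre n), hzero])
    (not_summable_one_sub_norm_halfPlaneToDisc hz₀ hd)
  intro z hz
  simpa [discToHalfPlane_halfPlaneToDisc hz] using
    hdisc (mem_ball_zero_iff.2 (norm_halfPlaneToDisc_lt_one hz))


section Shift

variable {𝕜 : Type*} [NontriviallyNormedField 𝕜] {S : Set 𝕜} {t : 𝕜}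

theorem AnalyticOnNhd.eqOn_zero_of_forall_add_eq_zero {E : Type*} [NormedAddCommGroup E]
    [NormedSpace 𝕜 E] {f : 𝕜 → E} (hf : AnalyticOnNhd 𝕜 f S) (hSo : IsOpen S)
    (hS : IsPreconnected S) (hSt : ∀ z ∈ S, z + t ∈ S) (h : ∀ z ∈ S, f (z + t) = 0) :
    EqOn f 0 S := by
  intro z hz
  refine hf.eqOn_zero_of_preconnected_of_eventuallyEq_zero hS (hSt z hz) ?_ hz
  have hnhds : (· - t) ⁻¹' S ∈ 𝓝 (z + t) :=
    (continuous_sub_right t).continuousAt.preimage_mem_nhds (by simpa using hSo.mem_nhds hz)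
  filter_upwards [hnhds] with w hw
  simpa using h (w - t) hw

theorem shift_relation_nat_mul {F G : 𝕜 → 𝕜} (hF : AnalyticOnNhd 𝕜 F S)
    (hG : AnalyticOnNhd 𝕜 G S) (hSo : IsOpen S) (hS : IsPreconnected S)
    (hSt : ∀ z ∈ S, z + t ∈ S) (h : ∀ z ∈ S, F z * G (z + t) = F (z + t) * G z) (n : ℕ) :
    ∀ z ∈ S, F z * G (z + n * t) = F (z + n * t) * G z := by
  have hSnt : ∀ n : ℕ, ∀ z ∈ S, z + n * t ∈ S := by
    intro n
    induction n with
    | zero => simp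
    | succ n ih => intro z hz; simpa [add_mul, add_assoc] using hSt _ (ih z hz)
  have hshift : ∀ H : 𝕜 → 𝕜, AnalyticOnNhd 𝕜 H S → ∀ n : ℕ,
      AnalyticOnNhd 𝕜 (fun z => H (z + n * t)) S :=
    fun H hH n => hH.comp (analyticOnNhd_id.add analyticOnNhd_const) (hSnt n)
  -- Unless `F` or `G` vanishes identically, neither does `F (· + n t) * G (· + n t)`, and this
  -- common factor of the two sides can be cancelled.
  by_cases hdeg : EqOn F 0 S ∨ EqOn G 0 S
  · rcases hdeg with h0 | h0 <;> intro z hz <;> simp [h0 hz, h0 (hSnt n z hz)]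
  induction n with
  | zero => simp
  | succ n ih =>
    have hQ : AnalyticOnNhd 𝕜
        (fun z => F z * G (z + (n + 1 : ℕ) * t) - F (z + (n + 1 : ℕ) * t) * G z) S :=
      (hF.mul (hshift G hG (n + 1))).sub ((hshift F hF (n + 1)).mul hG)
    simp only [Nat.cast_succ, add_mul, one_mul, ← add_assoc] at hQ ⊢
    have hprod : ∀ z ∈ S, (F z * G (z + n * t + t) - F (z + n * t + t) * G z) *
        (F (z + n * t) * G (z + n * t)) = 0 := by
      intro z hz
      linear_combination (F z * G (z + n * t)) * h _ (hSnt n z hz) +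
        (F (z + n * t + t) * G (z + n * t)) * ih z hz
    rcases hQ.eq_zero_or_eq_zero_of_mul_eq_zero ((hshift F hF n).mul (hshift G hG n)) hprod hS
      with hQ0 | hY0
    · exact fun z hz => sub_eq_zero.1 (hQ0 z hz)
    · refine absurd ?_ hdeg
      rcases (hshift F hF n).eq_zero_or_eq_zero_of_mul_eq_zero (hshift G hG n) hY0 hS
        with h0 | h0
      · exact Or.inl (hF.eqOn_zero_of_forall_add_eq_zero hSo hS (hSnt n) h0)
      · exact Or.inr (hG.eqOn_zero_of_forall_add_eq_zero hSo hS (hSnt n) h0)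

end Shift

theorem eq_const_mul_of_shift_relation_general (F G : ℂ → ℂ)
    (hF : DifferentiableOn ℂ F {z : ℂ | 2 < z.re})
    (hG : DifferentiableOn ℂ G {z : ℂ | 2 < z.re})
    (hFb : ∃ M : ℝ, ∀ z : ℂ, 2 < z.re → ‖F z‖ ≤ M)
    (hGb : ∃ M : ℝ, ∀ z : ℂ, 2 < z.re → ‖G z‖ ≤ M)
    (hGne : ∃ z : ℂ, 2 < z.re ∧ G z ≠ 0)
    (p : ℕ) (hp : 1 ≤ p)
    (h : ∀ z : ℂ, 2 < z.re → F z * G (z + (p : ℂ)) = F (z + (p : ℂ)) * G z) :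
    ∃ c : ℂ, ∀ z : ℂ, 2 < z.re → F z = c * G z := by
  have hS : IsOpen {z : ℂ | 2 < z.re} := isOpen_lt continuous_const Complex.continuous_re
  have hSp : ∀ z ∈ {z : ℂ | 2 < z.re}, z + p ∈ {z : ℂ | 2 < z.re} := fun z hz => by
    simpa using add_lt_add_of_lt_of_le hz (Nat.cast_nonneg (α := ℝ) p)
  have hiter := shift_relation_nat_mul (hF.analyticOnNhd hS) (hG.analyticOnNhd hS) hS
    (convex_halfSpace_re_gt 2).isPreconnected hSp h
  obtain ⟨z₀, hz₀, hGz₀⟩ := hGne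
  obtain ⟨MF, hMF⟩ := hFb
  obtain ⟨MG, hMG⟩ := hGb
  set c := F z₀ / G z₀
  refine ⟨c, fun z hz => sub_eq_zero.1 ?_⟩
  refine eqOn_zero_of_eq_zero_add_nat_mul (E := fun z => F z - c * G z) (M := MF + ‖c‖ * MG)
    (d := p) (hF.sub (hG.const_mul c)) (fun w hw => ?_) hz₀ (by exact_mod_cast hp)
    (fun n => ?_) hz
  · calc ‖F w - c * G w‖ ≤ ‖F w‖ + ‖c‖ * ‖G w‖ := by rw [← norm_mul]; exact norm_sub_le _ _
      _ ≤ MF + ‖c‖ * MG := by gcongr; exacts [hMF w hw, hMG w hw]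
  · have hrel := hiter n z₀ hz₀
    simp only [Complex.ofReal_natCast, c]
    field_simp
    linear_combination -hrel

/-- If `F` and `G` are nonzero bounded analytic functions on `{Re z > 2}` and
`F(z)G(z+p) = F(z+p)G(z)` there for some positive integer `p`, then `F = c·G`. -/
theorem eq_const_mul_of_shift_relation (F G : ℂ → ℂ)
    (hF : DifferentiableOn ℂ F {z : ℂ | 2 < z.re})
    (hG : DifferentiableOn ℂ G {z : ℂ | 2 < z.re})
    (hFb : ∃ M : ℝ, ∀ z : ℂ, 2 < z.re → ‖F z‖ ≤ M)
    (hGb : ∃ M : ℝ, ∀ z : ℂ, 2 < z.re → ‖G z‖ ≤ M)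
    (hFne : ∃ z : ℂ, 2 < z.re ∧ F z ≠ 0)
    (hGne : ∃ z : ℂ, 2 < z.re ∧ G z ≠ 0)
    (p : ℕ) (hp : 1 ≤ p)
    (h : ∀ z : ℂ, 2 < z.re → F z * G (z + (p : ℂ)) = F (z + (p : ℂ)) * G z) :
    ∃ c : ℂ, ∀ z : ℂ, 2 < z.re → F z = c * G z :=
  eq_const_mul_of_shift_relation_general F G hF hG hFb hGb hGne p hp h
end

section
/- Let δ ≥ 1 be an integer and a, b, c, d nonnegative integers with a + b − c − d = λ. Define H(z) = Γ((z+a)/(2δ)) Γ((z+b)/(2δ)) / (Γ((z+c)/(2δ)) Γ((z+d)/(2δ))). Then H is a rational function of z if and only if 2δ divides λ and 2δ divides at least one of a − c or a − d. -/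
open Complex

namespace GammaQuotientAux
open Polynomial Finset


lemma rm_comp (P : ℂ[X]) (t α : ℂ) :
    rootMultiplicity α (P.comp (X + C t)) = rootMultiplicity (α + t) P := by
  rw [rootMultiplicity_eq_rootMultiplicity (p := P.comp (X + C t)) (t := α),
      rootMultiplicity_eq_rootMultiplicity (p := P) (t := α + t), comp_assoc]
  congr 2
  simp [add_comp, add_assoc, map_add]

lemma rm_linear (x α : ℂ) :
    rootMultiplicity α (X + C x) = if α = -x then 1 else 0 := by
  classical
  rw [show (X + C x) = X - C (-x) by rw [map_neg, sub_neg_eq_add], rootMultiplicity_X_sub_C]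

lemma Gamma_prod (s : ℂ) (hs : Gamma s ≠ 0) (n : ℕ) :
    Gamma (s + n) = Gamma s * ∏ i ∈ range n, (s + i) := by
  induction n with
  | zero => simp
  | succ n ih =>
    have hsn : s + n ≠ 0 := by
      intro h
      apply hs
      rw [Complex.Gamma_eq_zero_iff]
      exact ⟨n, by linear_combination h⟩
    have : s + (n + 1 : ℕ) = (s + n) + 1 := by push_cast; ring
    rw [this, Complex.Gamma_add_one _ hsn, ih, prod_range_succ]
    ring

/-- factor polynomial whose eval at z is ∏ i<n, ((z+u)/T + i) -/
noncomputable def fac (T u n : ℕ) : ℂ[X] :=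
  ∏ i ∈ range n, (C ((T : ℂ))⁻¹ * (X + C ((u : ℂ) + T * i)))

lemma fac_ne_zero (T u n : ℕ) (hT : 0 < T) : fac T u n ≠ 0 := by
  apply prod_ne_zero_iff.2
  intro i _
  apply mul_ne_zero
  · simpa using fun h => by simp [h] at hT
  · exact (monic_X_add_C _).ne_zero

lemma fac_eval (T u n : ℕ) (hT : 0 < T) (z : ℂ) :
    (fac T u n).eval z = ∏ i ∈ range n, ((z + u) / T + i) := by
  have hT' : (T : ℂ) ≠ 0 := Nat.cast_ne_zero.2 hT.ne'
  rw [fac, eval_prod]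
  refine prod_congr rfl fun i _ => ?_
  simp only [eval_mul, eval_add, eval_C, eval_X]
  field_simp
  ring



lemma ratio (T : ℕ) (hT : 0 < T) (t u : ℕ) (h : (T : ℤ) ∣ (t : ℤ) - u) :
    ∃ P Q : ℂ[X], Q ≠ 0 ∧ ∀ z : ℂ, Gamma ((z + u) / T) ≠ 0 →
      Gamma ((z + t) / T) / Gamma ((z + u) / T) = P.eval z / Q.eval z := by
  have hT' : (T : ℂ) ≠ 0 := Nat.cast_ne_zero.2 hT.ne'
  obtain ⟨k, hk⟩ := h
  rcases le_or_gt 0 k with hk0 | hk0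
  · lift k to ℕ using hk0 with n
    have htu : t = u + T * n := by omega
    refine ⟨fac T u n, 1, one_ne_zero, fun z hz => ?_⟩
    have harg : (z + t) / T = (z + u) / T + n := by
      rw [htu]; push_cast; field_simp; ring
    rw [harg, Gamma_prod _ hz n, eval_one, div_one, fac_eval T u n hT,
      mul_comm, mul_div_assoc, div_self hz, mul_one]
  · set n := (-k).toNat with hndef
    have hn : (n : ℤ) = -k := Int.toNat_of_nonneg (by omega)
    have hunz : (u : ℤ) = t + T * n := by rw [hn]; linarith
    have hun : u = t + T * n := by exact_mod_cast hunz
    refine ⟨1, fac T t n, fac_ne_zero T t n hT, fun z hz => ?_⟩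
    have harg : (z + u) / T = (z + t) / T + n := by
      rw [hun]; push_cast; field_simp; ring
    set s := (z + t) / T with hs
    rw [eval_one, fac_eval T t n hT]
    by_cases hsz : Gamma s = 0
    · rw [hsz, zero_div]
      obtain ⟨j, hj⟩ := (Complex.Gamma_eq_zero_iff s).1 hsz
      have hjn : j < n := by
        by_contra hjn
        apply hz
        rw [harg, hj, Complex.Gamma_eq_zero_iff]
        refine ⟨j - n, ?_⟩
        push_cast [Nat.cast_sub (le_of_not_gt hjn)]
        ring
      have h0 : ∏ i ∈ range n, (s + i) = 0 :=
        prod_eq_zero (mem_range.2 hjn) (by rw [hj]; ring)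
      rw [h0, div_zero]
    · have hGP := Gamma_prod s hsz n
      rw [harg, hGP]
      have hprod : ∏ i ∈ range n, (s + i) ≠ 0 := by
        intro h0
        apply hz
        rw [harg, hGP, h0, mul_zero]
      rw [div_eq_div_iff (mul_ne_zero hsz hprod) hprod]
      ring

lemma rm_diff (T : ℂ) (P Q : ℂ[X]) (hP : P ≠ 0) (hQ : Q ≠ 0) (a b c d : ℂ)
    (hLR : (P.comp (X + C T)) * Q * (X + C c) * (X + C d)
         = P * (Q.comp (X + C T)) * (X + C a) * (X + C b)) (α : ℂ) :
    ((rootMultiplicity (α + T) P : ℤ) - rootMultiplicity (α + T) Q)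
      - ((rootMultiplicity α P : ℤ) - rootMultiplicity α Q)
    = (if α = -a then 1 else 0) + (if α = -b then 1 else 0)
      - (if α = -c then 1 else 0) - (if α = -d then 1 else 0) := by
  classical
  have hPc : P.comp (X + C T) ≠ 0 := comp_X_add_C_ne_zero_iff.2 hP
  have hQc : Q.comp (X + C T) ≠ 0 := comp_X_add_C_ne_zero_iff.2 hQ
  have hX : ∀ x : ℂ, (X + C x) ≠ 0 := fun x => (monic_X_add_C x).ne_zero
  have h := congrArg (rootMultiplicity α) hLR
  rw [rootMultiplicity_mul (mul_ne_zero (mul_ne_zero (mul_ne_zero hPc hQ) (hX c)) (hX d)),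
      rootMultiplicity_mul (mul_ne_zero (mul_ne_zero hPc hQ) (hX c)),
      rootMultiplicity_mul (mul_ne_zero hPc hQ),
      rootMultiplicity_mul (mul_ne_zero (mul_ne_zero (mul_ne_zero hP hQc) (hX a)) (hX b)),
      rootMultiplicity_mul (mul_ne_zero (mul_ne_zero hP hQc) (hX a)),
      rootMultiplicity_mul (mul_ne_zero hP hQc),
      rm_comp, rm_comp, rm_linear, rm_linear, rm_linear, rm_linear] at h
  split_ifs at h ⊢ <;> omega

lemma sum_ind (T : ℕ) (hT : 0 < T) (N : ℕ) (v : ℤ) (hv : v.natAbs < N) :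
    ∑ i ∈ range (2 * N), (if (T : ℤ) * ((i : ℤ) - N) = v then (1 : ℤ) else 0)
      = if (T : ℤ) ∣ v then 1 else 0 := by
  classical
  by_cases hdvd : (T : ℤ) ∣ v
  · obtain ⟨j, hj⟩ := hdvd
    have hTz : (T : ℤ) ≠ 0 := by exact_mod_cast hT.ne'
    have hjb : j.natAbs < N := by
      have h1 : v.natAbs = T * j.natAbs := by
        rw [hj, Int.natAbs_mul, Int.natAbs_natCast]
      nlinarith [Nat.one_le_iff_ne_zero.2 hT.ne']
    have hcond : ∀ i : ℕ, ((T : ℤ) * ((i : ℤ) - N) = v) ↔ (i = (j + N).toNat) := by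
      intro i
      rw [hj]
      constructor
      · intro h
        have h2 : (i : ℤ) - N = j := mul_left_cancel₀ hTz h
        omega
      · intro h
        have h2 : (i : ℤ) = j + N := by omega
        rw [h2]; ring
    simp_rw [hcond]
    rw [Finset.sum_ite_eq' (range (2 * N)) ((j + N).toNat) (fun _ => (1 : ℤ)), if_pos]
    · rw [if_pos ⟨j, hj⟩]
    · rw [mem_range]; omega
  · rw [if_neg hdvd]
    apply sum_eq_zero
    intro i _
    rw [if_neg]
    intro h
    exact hdvd ⟨(i : ℤ) - N, h.symm⟩




lemma key (T : ℕ) (hT : 0 < T) (P Q : ℂ[X]) (hP : P ≠ 0) (hQ : Q ≠ 0) (a b c d : ℕ)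
    (hLR : (P.comp (X + C (T : ℂ))) * Q * (X + C (c : ℂ)) * (X + C (d : ℂ))
         = P * (Q.comp (X + C (T : ℂ))) * (X + C (a : ℂ)) * (X + C (b : ℂ))) :
    (1 : ℤ) + (if (T : ℤ) ∣ (a : ℤ) - b then 1 else 0)
      = (if (T : ℤ) ∣ (a : ℤ) - c then 1 else 0)
        + (if (T : ℤ) ∣ (a : ℤ) - d then 1 else 0) := by
  classical
  have hTc : (T : ℂ) ≠ 0 := Nat.cast_ne_zero.2 hT.ne'
  set f : ℂ → ℤ := fun α => (rootMultiplicity α P : ℤ) - rootMultiplicity α Q with hf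
  have hsupp : {α : ℂ | f α ≠ 0}.Finite := by
    apply Set.Finite.subset ((P.finite_setOf_isRoot hP).union (Q.finite_setOf_isRoot hQ))
    intro α hα
    by_contra hroot
    simp only [Set.mem_union, Set.mem_setOf_eq, not_or] at hroot
    apply hα
    simp only [hf, rootMultiplicity_eq_zero hroot.1, rootMultiplicity_eq_zero hroot.2,
      Nat.cast_zero, sub_zero]
  set F : ℤ → ℤ := fun k => f (-(a : ℂ) + T * k) with hF
  have hFsupp : {k : ℤ | F k ≠ 0}.Finite := by
    apply Set.Finite.preimage _ hsupp
    intro k1 _ k2 _ h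
    have h1 : (T : ℂ) * k1 = (T : ℂ) * k2 := by linear_combination h
    have h2 : ((k1 : ℤ) : ℂ) = ((k2 : ℤ) : ℂ) := mul_left_cancel₀ hTc h1
    exact_mod_cast h2
  obtain ⟨N₀, hN₀⟩ : ∃ N₀ : ℕ, ∀ k : ℤ, (N₀ : ℤ) ≤ |k| → F k = 0 := by
    refine ⟨(hFsupp.toFinset.sup fun k => k.natAbs) + 1, fun k hk => ?_⟩
    by_contra hkne
    have hmem : k ∈ hFsupp.toFinset := hFsupp.mem_toFinset.2 hkne
    have h3 : k.natAbs ≤ hFsupp.toFinset.sup fun k => k.natAbs :=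
      Finset.le_sup (f := fun k : ℤ => k.natAbs) hmem
    rw [Int.abs_eq_natAbs] at hk
    omega
  set N : ℕ := N₀ + ((a : ℤ) - b).natAbs + ((a : ℤ) - c).natAbs + ((a : ℤ) - d).natAbs + 1
    with hN
  have hE : ∀ k : ℤ, F (k + 1) - F k =
      (if (T : ℤ) * k = 0 then 1 else 0) + (if (T : ℤ) * k = (a : ℤ) - b then 1 else 0)
        - (if (T : ℤ) * k = (a : ℤ) - c then 1 else 0)
        - (if (T : ℤ) * k = (a : ℤ) - d then 1 else 0) := by
    intro k
    have h := rm_diff (T : ℂ) P Q hP hQ a b c d hLR (-(a : ℂ) + T * k)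
    have e1 : -(a : ℂ) + T * k + T = -(a : ℂ) + T * ((k + 1 : ℤ) : ℂ) := by push_cast; ring
    rw [e1] at h
    have key_iff : ∀ m : ℕ, (-(a : ℂ) + T * k = -(m : ℂ)) ↔ ((T : ℤ) * k = (a : ℤ) - m) := by
      intro m
      constructor
      · intro h'
        have h2 : (((T : ℤ) * k : ℤ) : ℂ) = (((a : ℤ) - m : ℤ) : ℂ) := by
          push_cast
          linear_combination h'
        exact_mod_cast h2
      · intro h'
        have h2 : (((T : ℤ) * k : ℤ) : ℂ) = (((a : ℤ) - m : ℤ) : ℂ) := by exact_mod_cast h'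
        push_cast at h2
        linear_combination h2
    simp only [key_iff, sub_self] at h
    exact h
  have htel := Finset.sum_range_sub (fun i : ℕ => F ((i : ℤ) - N)) (2 * N)
  have hterm : ∀ i : ℕ, F (((i : ℕ) + 1 : ℕ) - (N : ℤ)) - F ((i : ℤ) - N)
      = F (((i : ℤ) - N) + 1) - F ((i : ℤ) - N) := by
    intro i; congr 2; push_cast; ring
  rw [Finset.sum_congr rfl (fun i _ => (hterm i).trans (hE ((i : ℤ) - N)))] at htel
  have hFN : F ((2 * N : ℕ) - (N : ℤ)) = 0 := by
    apply hN₀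
    have e2 : ((2 * N : ℕ) : ℤ) - (N : ℤ) = (N : ℤ) := by push_cast; ring
    rw [e2, _root_.abs_of_nonneg (by positivity)]
    rw [hN]; omega
  have hFmN : F ((0 : ℕ) - (N : ℤ)) = 0 := by
    apply hN₀
    have e2 : ((0 : ℕ) : ℤ) - (N : ℤ) = -(N : ℤ) := by push_cast; ring
    rw [e2, abs_neg, _root_.abs_of_nonneg (by positivity)]
    rw [hN]; omega
  rw [hFN, hFmN, sub_zero] at htel
  have hsplit : ∑ i ∈ range (2 * N),
      ((if (T : ℤ) * ((i : ℤ) - N) = 0 then (1:ℤ) else 0)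
        + (if (T : ℤ) * ((i : ℤ) - N) = (a : ℤ) - b then 1 else 0)
        - (if (T : ℤ) * ((i : ℤ) - N) = (a : ℤ) - c then 1 else 0)
        - (if (T : ℤ) * ((i : ℤ) - N) = (a : ℤ) - d then 1 else 0))
      = (if (T : ℤ) ∣ (0 : ℤ) then 1 else 0) + (if (T : ℤ) ∣ (a : ℤ) - b then 1 else 0)
        - (if (T : ℤ) ∣ (a : ℤ) - c then 1 else 0)
        - (if (T : ℤ) ∣ (a : ℤ) - d then 1 else 0) := by
    rw [← sum_ind T hT N 0 (by rw [hN]; simp),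
        ← sum_ind T hT N ((a : ℤ) - b) (by rw [hN]; omega),
        ← sum_ind T hT N ((a : ℤ) - c) (by rw [hN]; omega),
        ← sum_ind T hT N ((a : ℤ) - d) (by rw [hN]; omega)]
    rw [← Finset.sum_add_distrib, ← Finset.sum_sub_distrib, ← Finset.sum_sub_distrib]
  rw [hsplit] at htel
  rw [if_pos (dvd_zero _)] at htel
  omega



lemma Gpos (T : ℕ) (hT : 0 < T) (x k : ℕ) :
    Gamma (((k : ℂ) + 1 + (x : ℂ)) / (T : ℂ)) ≠ 0 := by
  apply Complex.Gamma_ne_zero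
  intro m hm
  rw [show ((k : ℂ) + 1 + (x : ℂ)) / (T : ℂ) = ((((k + 1 + x : ℝ)) / T : ℝ) : ℂ) by
        push_cast; ring,
      show -(m : ℂ) = ((-(m : ℝ) : ℝ) : ℂ) by push_cast; ring] at hm
  have hr := Complex.ofReal_inj.1 hm
  have h1 : 0 < ((k : ℝ) + 1 + x) / T := by positivity
  have h2 : -(m : ℝ) ≤ 0 := by simp [Nat.cast_nonneg]
  linarith

lemma pt_eq (T : ℕ) (hT : 0 < T) (a b c d : ℕ) (P Q : ℂ[X]) (z : ℂ)
    (hAg : Gamma ((z + a) / T) ≠ 0) (hBg : Gamma ((z + b) / T) ≠ 0)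
    (hCg : Gamma ((z + c) / T) ≠ 0) (hDg : Gamma ((z + d) / T) ≠ 0)
    (hQz : Q.eval z ≠ 0) (hQz' : Q.eval (z + T) ≠ 0)
    (hH0 : Gamma ((z + a) / T) * Gamma ((z + b) / T) /
        (Gamma ((z + c) / T) * Gamma ((z + d) / T)) = P.eval z / Q.eval z)
    (hH1 : Gamma ((z + T + a) / T) * Gamma ((z + T + b) / T) /
        (Gamma ((z + T + c) / T) * Gamma ((z + T + d) / T))
      = P.eval (z + T) / Q.eval (z + T)) :
    ((P.comp (X + C (T : ℂ))) * Q * (X + C (c : ℂ)) * (X + C (d : ℂ))).eval z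
      = (P * (Q.comp (X + C (T : ℂ))) * (X + C (a : ℂ)) * (X + C (b : ℂ))).eval z := by
  have hTc : (T : ℂ) ≠ 0 := Nat.cast_ne_zero.2 hT.ne'
  have hpa : (z + a) / T ≠ 0 := fun h0 => hAg (by rw [h0, Complex.Gamma_zero])
  have hpb : (z + b) / T ≠ 0 := fun h0 => hBg (by rw [h0, Complex.Gamma_zero])
  have hpc : (z + c) / T ≠ 0 := fun h0 => hCg (by rw [h0, Complex.Gamma_zero])
  have hpd : (z + d) / T ≠ 0 := fun h0 => hDg (by rw [h0, Complex.Gamma_zero])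
  have hrec : ∀ x : ℕ, (z + x) / T ≠ 0 →
      Gamma ((z + T + x) / T) = ((z + x) / T) * Gamma ((z + x) / T) := by
    intro x hx0
    have harg : (z + T + x) / T = (z + x) / T + 1 := by field_simp; ring
    rw [harg, Complex.Gamma_add_one _ hx0]
  rw [hrec a hpa, hrec b hpb, hrec c hpc, hrec d hpd] at hH1
  have e0 : Gamma ((z + a) / T) * Gamma ((z + b) / T) * Q.eval z
      = P.eval z * (Gamma ((z + c) / T) * Gamma ((z + d) / T)) :=
    (div_eq_div_iff (mul_ne_zero hCg hDg) hQz).1 hH0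
  have e1 := (div_eq_div_iff
    (mul_ne_zero (mul_ne_zero hpc hCg) (mul_ne_zero hpd hDg)) hQz').1 hH1
  have h2 : (P.eval (z + T) * Q.eval z * ((z + c) / T) * ((z + d) / T))
        * (Gamma ((z + c) / T) * Gamma ((z + d) / T))
      = (P.eval z * Q.eval (z + T) * ((z + a) / T) * ((z + b) / T))
        * (Gamma ((z + c) / T) * Gamma ((z + d) / T)) := by
    linear_combination (-(Q.eval z)) * e1
      + ((z + a) / T * ((z + b) / T) * Q.eval (z + T)) * e0
  have h3 := mul_right_cancel₀ (mul_ne_zero hCg hDg) h2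
  have hzx : ∀ x : ℕ, z + (x : ℂ) = (T : ℂ) * ((z + x) / T) :=
    fun x => (mul_div_cancel₀ _ hTc).symm
  simp only [eval_mul, eval_comp, eval_add, eval_X, eval_C]
  rw [hzx a, hzx b, hzx c, hzx d]
  linear_combination (T : ℂ) * (T : ℂ) * h3

lemma derive_LR (T : ℕ) (hT : 0 < T) (a b c d : ℕ) (P Q : ℂ[X]) (hQ : Q ≠ 0)
    (h : ∀ z : ℂ, Gamma ((z + c) / T) * Gamma ((z + d) / T) ≠ 0 →
      Gamma ((z + a) / T) * Gamma ((z + b) / T) /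
        (Gamma ((z + c) / T) * Gamma ((z + d) / T)) = P.eval z / Q.eval z) :
    P ≠ 0 ∧ (P.comp (X + C (T : ℂ))) * Q * (X + C (c : ℂ)) * (X + C (d : ℂ))
      = P * (Q.comp (X + C (T : ℂ))) * (X + C (a : ℂ)) * (X + C (b : ℂ)) := by
  have hG : ∀ (x k : ℕ), Gamma ((((k : ℂ) + 1) + (x : ℂ)) / T) ≠ 0 := fun x k => Gpos T hT x k
  have hne : ∀ k : ℕ, P.eval ((k : ℂ) + 1) ≠ 0 ∧ Q.eval ((k : ℂ) + 1) ≠ 0 := by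
    intro k
    have hH := h ((k : ℂ) + 1) (mul_ne_zero (hG c k) (hG d k))
    have hL : Gamma ((((k : ℂ) + 1) + a) / T) * Gamma ((((k : ℂ) + 1) + b) / T) /
        (Gamma ((((k : ℂ) + 1) + c) / T) * Gamma ((((k : ℂ) + 1) + d) / T)) ≠ 0 :=
      div_ne_zero (mul_ne_zero (hG a k) (hG b k)) (mul_ne_zero (hG c k) (hG d k))
    rw [hH] at hL
    exact ⟨fun h0 => hL (by rw [h0, zero_div]), fun h0 => hL (by rw [h0, div_zero])⟩
  have hP : P ≠ 0 := fun h0 => (hne 0).1 (by rw [h0, eval_zero])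
  refine ⟨hP, ?_⟩
  have hpt : ∀ k : ℕ,
      ((P.comp (X + C (T : ℂ))) * Q * (X + C (c : ℂ)) * (X + C (d : ℂ))).eval ((k : ℂ) + 1)
      = (P * (Q.comp (X + C (T : ℂ))) * (X + C (a : ℂ)) * (X + C (b : ℂ))).eval
          ((k : ℂ) + 1) := by
    intro k
    have hzT : ((k : ℂ) + 1) + T = ((k + T : ℕ) : ℂ) + 1 := by push_cast; ring
    apply pt_eq T hT a b c d P Q ((k : ℂ) + 1) (hG a k) (hG b k) (hG c k) (hG d k)
      (hne k).2 (by rw [hzT]; exact (hne (k + T)).2)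
      (h ((k : ℂ) + 1) (mul_ne_zero (hG c k) (hG d k)))
      (by rw [hzT]; exact h (((k + T : ℕ) : ℂ) + 1) (mul_ne_zero (hG c (k + T)) (hG d (k + T))))
  apply Polynomial.eq_of_infinite_eval_eq
  apply Set.infinite_of_injective_forall_mem (f := fun k : ℕ => (k : ℂ) + 1)
  · intro k1 k2 hk
    have h1 : ((k1 : ℕ) : ℂ) = ((k2 : ℕ) : ℂ) := by
      have : ((k1 : ℂ) + 1) = ((k2 : ℂ) + 1) := hk
      linear_combination this
    exact_mod_cast h1
  · intro k
    exact hpt k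



lemma arith (D a b c d lam : ℤ) (hlam : a + b - c - d = lam)
    (eq1 : (1 : ℤ) + (if D ∣ a - b then 1 else 0)
      = (if D ∣ a - c then 1 else 0) + (if D ∣ a - d then 1 else 0))
    (eq2 : (1 : ℤ) + (if D ∣ b - a then 1 else 0)
      = (if D ∣ b - c then 1 else 0) + (if D ∣ b - d then 1 else 0)) :
    D ∣ lam ∧ (D ∣ a - c ∨ D ∣ a - d) := by
  classical
  subst hlam
  by_cases hac : D ∣ a - c <;> by_cases had : D ∣ a - d
  · -- both: from eq1 get D ∣ a - b, then b ≡ a ≡ c ≡ d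
    refine ⟨?_, Or.inl hac⟩
    have hab : D ∣ a - b := by
      by_contra hab
      simp [hac, had, hab] at eq1
    have hbd : D ∣ b - d := by
      have := dvd_sub had hab
      have h2 : (a - d) - (a - b) = b - d := by ring
      rwa [h2] at this
    have := dvd_add hac hbd
    have h3 : (a - c) + (b - d) = a + b - c - d := by ring
    rwa [h3] at this
  · -- only a ≡ c
    refine ⟨?_, Or.inl hac⟩
    have hab : ¬ D ∣ a - b := by
      by_contra hab
      simp [hac, had, hab] at eq1
    have hba : ¬ D ∣ b - a := fun h => hab (by
      have := dvd_neg.2 h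
      rwa [show -(b - a) = a - b by ring] at this)
    have hbc : ¬ D ∣ b - c := fun h => hba (by
      have := dvd_sub h hac
      rwa [show (b - c) - (a - c) = b - a by ring] at this)
    have hbd : D ∣ b - d := by
      by_contra hbd
      simp [hba, hbc, hbd] at eq2
    have := dvd_add hac hbd
    rwa [show (a - c) + (b - d) = a + b - c - d by ring] at this
  · -- only a ≡ d
    refine ⟨?_, Or.inr had⟩
    have hab : ¬ D ∣ a - b := by
      by_contra hab
      simp [hac, had, hab] at eq1
    have hba : ¬ D ∣ b - a := fun h => hab (by
      have := dvd_neg.2 h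
      rwa [show -(b - a) = a - b by ring] at this)
    have hbd : ¬ D ∣ b - d := fun h => hba (by
      have := dvd_sub h had
      rwa [show (b - d) - (a - d) = b - a by ring] at this)
    have hbc : D ∣ b - c := by
      by_contra hbc
      simp [hba, hbc, hbd] at eq2
    have := dvd_add had hbc
    rwa [show (a - d) + (b - c) = a + b - c - d by ring] at this
  · exfalso
    by_cases hab : D ∣ a - b <;> simp [hac, had, hab] at eq1


end GammaQuotientAux

/-- Rationality criterion for a quotient of four Gamma factors:
`H(z) = Γ((z+a)/(2δ))Γ((z+b)/(2δ)) / (Γ((z+c)/(2δ))Γ((z+d)/(2δ)))`, with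
`a + b − c − d = λ`, is a rational function iff `2δ ∣ λ` and `2δ` divides
one of `a − c` or `a − d`. -/
theorem gamma_quotient_rational_iff (δ : ℕ) (hδ : 1 ≤ δ) (a b c d : ℕ) (lam : ℤ)
    (hlam : (a : ℤ) + b - c - d = lam) :
    (∃ P Q : Polynomial ℂ, Q ≠ 0 ∧ ∀ z : ℂ,
        Gamma ((z + c) / (2 * δ)) * Gamma ((z + d) / (2 * δ)) ≠ 0 →
          Gamma ((z + a) / (2 * δ)) * Gamma ((z + b) / (2 * δ)) /
              (Gamma ((z + c) / (2 * δ)) * Gamma ((z + d) / (2 * δ)))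
            = P.eval z / Q.eval z)
      ↔ ((2 * δ : ℤ) ∣ lam ∧
          ((2 * δ : ℤ) ∣ (a : ℤ) - c ∨ (2 * δ : ℤ) ∣ (a : ℤ) - d)) := by
  classical
  open Polynomial GammaQuotientAux in
  have hT : 0 < 2 * δ := by omega
  set T : ℕ := 2 * δ with hTdef
  have hcast : ((T : ℕ) : ℂ) = 2 * (δ : ℂ) := by rw [hTdef]; push_cast; ring
  have hcastZ : ((T : ℕ) : ℤ) = 2 * (δ : ℤ) := by rw [hTdef]; push_cast; ring
  constructor
  · rintro ⟨P, Q, hQ, hPQ⟩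
    have h' : ∀ z : ℂ, Gamma ((z + c) / (T : ℂ)) * Gamma ((z + d) / (T : ℂ)) ≠ 0 →
        Gamma ((z + a) / (T : ℂ)) * Gamma ((z + b) / (T : ℂ)) /
          (Gamma ((z + c) / (T : ℂ)) * Gamma ((z + d) / (T : ℂ)))
        = P.eval z / Q.eval z := by
      intro z hz
      rw [hcast] at hz ⊢
      exact hPQ z hz
    obtain ⟨hP, hLR⟩ := GammaQuotientAux.derive_LR T hT a b c d P Q hQ h'
    have eq1 := GammaQuotientAux.key T hT P Q hP hQ a b c d hLR
    have eq2 := GammaQuotientAux.key T hT P Q hP hQ b a c d (hLR.trans (by ring))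
    rw [hcastZ] at eq1 eq2
    exact GammaQuotientAux.arith (2 * (δ : ℤ)) a b c d lam hlam eq1 eq2
  · rintro ⟨hlamdvd, hor⟩
    rw [← hcastZ] at hlamdvd
    rcases hor with hdvd | hdvd
    · rw [← hcastZ] at hdvd
      have hbd : (T : ℤ) ∣ (b : ℤ) - d := by
        have h0 := dvd_sub hlamdvd hdvd
        rwa [show lam - ((a : ℤ) - c) = (b : ℤ) - d by rw [← hlam]; ring] at h0
      obtain ⟨P1, Q1, hQ1, h1⟩ := GammaQuotientAux.ratio T hT a c hdvd
      obtain ⟨P2, Q2, hQ2, h2⟩ := GammaQuotientAux.ratio T hT b d hbd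
      refine ⟨P1 * P2, Q1 * Q2, mul_ne_zero hQ1 hQ2, fun z hz => ?_⟩
      rw [← hcast] at hz ⊢
      have hc := left_ne_zero_of_mul hz
      have hd := right_ne_zero_of_mul hz
      rw [Polynomial.eval_mul, Polynomial.eval_mul, ← div_mul_div_comm,
        h1 z hc, h2 z hd, div_mul_div_comm]
    · rw [← hcastZ] at hdvd
      have hbc : (T : ℤ) ∣ (b : ℤ) - c := by
        have h0 := dvd_sub hlamdvd hdvd
        rwa [show lam - ((a : ℤ) - d) = (b : ℤ) - c by rw [← hlam]; ring] at h0
      obtain ⟨P1, Q1, hQ1, h1⟩ := GammaQuotientAux.ratio T hT a d hdvd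
      obtain ⟨P2, Q2, hQ2, h2⟩ := GammaQuotientAux.ratio T hT b c hbc
      refine ⟨P1 * P2, Q1 * Q2, mul_ne_zero hQ1 hQ2, fun z hz => ?_⟩
      rw [← hcast] at hz ⊢
      have hc := left_ne_zero_of_mul hz
      have hd := right_ne_zero_of_mul hz
      rw [Polynomial.eval_mul, Polynomial.eval_mul,
        mul_comm (Gamma ((z + (c : ℂ)) / (T : ℂ))) (Gamma ((z + (d : ℂ)) / (T : ℂ))),
        ← div_mul_div_comm, h1 z hd, h2 z hc, div_mul_div_comm]
end

section
/- Let p, s, d, n, m, l be positive integers with p < s, m < l, l + p = m + s, l > s and m > p. If the function Γ((z+2m)/(2p))Γ((z+p+n)/(2p))/(Γ(z/(2p))Γ((z+2m+p+n)/(2p))) is a rational function of z, then 2p divides 2m or 2p divides p + n. -/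
/-!
Put `z_k = -(2m + 2pk)`. Then `Γ((z_k + 2m)/(2p)) = Γ(-k)` sits at a pole of `Γ`, while, unless
`2p ∣ 2m` or `2p ∣ p + n`, neither argument `z_k/(2p)`, `(z_k + 2m + p + n)/(2p)` of the
denominator is an integer. So the Gamma quotient would have infinitely many poles, which a rational
function cannot have. In Mathlib's conventions `Γ` vanishes at its poles and `P(z)/Q(z) = 0` at
zeros of `Q`, so this reads: `P/Q` vanishes on an infinite set, hence `P = 0`; but at `z = 1` all
Gamma values are nonzero.
-/

open Complex Polynomial

theorem Polynomial.eq_zero_of_eval_div_eq_zero {K : Type*} [Field K] {P Q : K[X]} (hQ : Q ≠ 0)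
    {S : Set K} (hS : S.Infinite) (h : ∀ z ∈ S, P.eval z / Q.eval z = 0) : P = 0 := by
  have hPQ : P * Q = 0 := by
    refine eq_zero_of_infinite_isRoot _ (hS.mono fun z hz => ?_)
    simpa [div_eq_zero_iff] using h z hz
  exact (mul_eq_zero.mp hPQ).resolve_right hQ

namespace Complex

theorem Gamma_intCast_div_natCast_ne_zero {q : ℕ} (hq : q ≠ 0) {N : ℤ} (hN : ¬(q : ℤ) ∣ N) :
    Gamma (N / q) ≠ 0 := by
  refine Gamma_ne_zero fun j hj => hN ⟨-j, ?_⟩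
  rw [div_eq_iff (Nat.cast_ne_zero.mpr hq)] at hj
  exact_mod_cast (by push_cast; linear_combination hj : ((N : ℤ) : ℂ) = ((q * -(j : ℤ) : ℤ) : ℂ))

theorem Gamma_one_add_natCast_div_ne_zero {q : ℕ} (hq : q ≠ 0) (a : ℕ) :
    Gamma ((1 + a) / q) ≠ 0 := by
  refine Gamma_ne_zero_of_re_pos ?_
  rw [show ((1 + a) / q : ℂ) = ((1 + a) / q : ℝ) by push_cast; rfl, ofReal_re]
  positivity

section GammaQuotient

variable {q a : ℕ}

theorem Gamma_natCast_div_eq_zero_at_neg (hq : q ≠ 0) (k : ℕ) :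
    Gamma ((-((a + q * k : ℕ) : ℂ) + a) / q) = 0 := by
  rw [show (-((a + q * k : ℕ) : ℂ) + a) / q = -(k : ℂ) by
    push_cast; field_simp [Nat.cast_ne_zero.mpr hq]; ring]
  exact Gamma_neg_nat_eq_zero k

theorem Gamma_natCast_div_ne_zero_at_neg {c : ℕ} (hq : q ≠ 0) (hc : ¬(q : ℤ) ∣ c - a) (k : ℕ) :
    Gamma ((-((a + q * k : ℕ) : ℂ) + c) / q) ≠ 0 := by
  rw [show -((a + q * k : ℕ) : ℂ) + c = ((c - a - q * k : ℤ) : ℂ) by push_cast; ring]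
  refine Gamma_intCast_div_natCast_ne_zero hq fun h => hc ?_
  simpa using h.add (dvd_mul_right (q : ℤ) k)

theorem dvd_sub_or_dvd_sub_of_gamma_quotient_eq_eval_div {b c d : ℕ} (hq : q ≠ 0)
    {P Q : ℂ[X]} (hQ : Q ≠ 0)
    (h : ∀ z : ℂ, Gamma ((z + c) / q) * Gamma ((z + d) / q) ≠ 0 →
      Gamma ((z + a) / q) * Gamma ((z + b) / q) / (Gamma ((z + c) / q) * Gamma ((z + d) / q))
        = P.eval z / Q.eval z) :
    (q : ℤ) ∣ c - a ∨ (q : ℤ) ∣ d - a := by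
  by_contra! ⟨hc, hd⟩
  have hinj : Function.Injective fun k : ℕ => -((a + q * k : ℕ) : ℂ) := fun k l hkl => by
    simpa [hq] using hkl
  have hP : P = 0 := by
    refine eq_zero_of_eval_div_eq_zero hQ (Set.infinite_range_of_injective hinj) ?_
    rintro _ ⟨k, rfl⟩
    rw [← h _ (mul_ne_zero (Gamma_natCast_div_ne_zero_at_neg hq hc k)
      (Gamma_natCast_div_ne_zero_at_neg hq hd k)), Gamma_natCast_div_eq_zero_at_neg hq,
      zero_mul, zero_div]
  have hΓ : ∀ e : ℕ, Gamma ((1 + e) / q) ≠ 0 := Gamma_one_add_natCast_div_ne_zero hq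
  have h1 := h 1 (mul_ne_zero (hΓ c) (hΓ d))
  rw [hP, eval_zero, zero_div] at h1
  exact div_ne_zero (mul_ne_zero (hΓ a) (hΓ b)) (mul_ne_zero (hΓ c) (hΓ d)) h1

end GammaQuotient

end Complex

theorem dvd_of_gamma_quotient_rational_general (p n m : ℕ)
    (hp : 0 < p)
    (hrat : ∃ P Q : Polynomial ℂ, Q ≠ 0 ∧ ∀ z : ℂ,
        Gamma (z / (2 * p)) * Gamma ((z + 2 * m + p + n) / (2 * p)) ≠ 0 →
          Gamma ((z + 2 * m) / (2 * p)) * Gamma ((z + p + n) / (2 * p)) /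
              (Gamma (z / (2 * p)) * Gamma ((z + 2 * m + p + n) / (2 * p)))
            = P.eval z / Q.eval z) :
    2 * p ∣ 2 * m ∨ 2 * p ∣ p + n := by
  obtain ⟨P, Q, hQ, hPQ⟩ := hrat
  have key := dvd_sub_or_dvd_sub_of_gamma_quotient_eq_eval_div (q := 2 * p) (a := 2 * m)
    (b := p + n) (c := 0) (d := 2 * m + p + n) (by positivity) hQ
    (by push_cast; simpa only [add_zero, add_assoc] using hPQ)
  push_cast at key
  rcases key with h | h
  · exact Or.inl (by exact_mod_cast (dvd_neg.mp (by simpa using h) : (2 * p : ℤ) ∣ 2 * m))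
  · exact Or.inr (by exact_mod_cast (by simpa [add_assoc] using h : (2 * p : ℤ) ∣ p + n))

/-- If `Γ((z+2m)/(2p))Γ((z+p+n)/(2p)) / (Γ(z/(2p))Γ((z+2m+p+n)/(2p)))` is a rational
function, then `2p ∣ 2m` or `2p ∣ p + n`. -/
theorem dvd_of_gamma_quotient_rational (p s d n m l : ℕ)
    (hp : 0 < p) (hs : 0 < s) (hd : 0 < d) (hn : 0 < n) (hm : 0 < m) (hl : 0 < l)
    (hps : p < s) (hml : m < l) (hsum : l + p = m + s) (hls : s < l) (hmp : p < m)
    (hrat : ∃ P Q : Polynomial ℂ, Q ≠ 0 ∧ ∀ z : ℂ,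
        Gamma (z / (2 * p)) * Gamma ((z + 2 * m + p + n) / (2 * p)) ≠ 0 →
          Gamma ((z + 2 * m) / (2 * p)) * Gamma ((z + p + n) / (2 * p)) /
              (Gamma (z / (2 * p)) * Gamma ((z + 2 * m + p + n) / (2 * p)))
            = P.eval z / Q.eval z) :
    2 * p ∣ 2 * m ∨ 2 * p ∣ p + n :=
  dvd_of_gamma_quotient_rational_general p n m hp hrat
end
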